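/- In the setting of the abstract constraint problem (V Hilbert, a bounded coercive symmetric, L_1,…,L_N ∈ V* linearly independent), let u^{(k)} be the solution with data g = e_k (k-th standard basis vector), and define M_{lk} = a(u^{(k)}, u^{(l)}). Then M is symmetric positive definite. -/

import Mathlib

open MeasureTheory Real
open scoped RealInnerProductSpace ENNReal
noncomputable section
abbrev Euc (d : ℕ) := EuclideanSpace ℝ (Fin d)

structure MemH1 {d : ℕ} (Ω : Set (Euc d)) (u : Euc d → ℝ) : Prop where
  diffOn : DifferentiableOn ℝ u Ω
  memL2 : MemLp u 2 (volume.restrict Ω)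
  gradL2 : MemLp (fun x => ‖gradient u x‖) 2 (volume.restrict Ω)

structure MemH10 {d : ℕ} (Ω : Set (Euc d)) (u : Euc d → ℝ) : Prop extends MemH1 Ω u where
  zeroBoundary : ∀ x ∉ Ω, u x = 0

/-! The matrix is the Gram matrix of the `u⁽ᵏ⁾` for the form `a`, which coercivity makes an inner
product. The `u⁽ᵏ⁾` are linearly independent because `L_j (u⁽ᵏ⁾) = δ_jk`, so the quadratic form of
the matrix at `x ≠ 0` is `a(w, w) > 0` with `w = ∑ x_k u⁽ᵏ⁾ ≠ 0`. -/

namespace LinearMap.BilinForm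

variable {R V ι : Type*} [CommRing R] [AddCommGroup V] [Module R V]

/-- Indexed so that `star x ⬝ᵥ gram a u *ᵥ x = a w w` with `w = ∑ x_k u_k`, as for `Matrix.gram`. -/
def gram (a : V →ₗ[R] V →ₗ[R] R) (u : ι → V) : Matrix ι ι R :=
  Matrix.of fun i j => a (u j) (u i)

theorem gram_isSymm {a : V →ₗ[R] V →ₗ[R] R} (ha : ∀ x y, a x y = a y x) (u : ι → V) :
    (gram a u).IsSymm := by
  ext i j
  exact ha _ _

theorem apply_linearCombination_self (a : V →ₗ[R] V →ₗ[R] R) (u : ι → V) (x : ι →₀ R) :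
    a (Finsupp.linearCombination R u x) (Finsupp.linearCombination R u x) =
      x.sum fun i xi => x.sum fun j xj => xi * gram a u i j * xj := by
  simp only [gram, Matrix.of_apply, Finsupp.linearCombination_apply, map_finsuppSum,
    LinearMap.finsupp_sum_apply, map_smul, LinearMap.smul_apply, smul_eq_mul, Finsupp.mul_sum]
  exact Finsupp.sum_congr fun i _ => Finsupp.sum_congr fun j _ => by ring

theorem gram_posDef [PartialOrder R] [StarRing R] [TrivialStar R] {a : V →ₗ[R] V →ₗ[R] R}
    (ha : ∀ x y, a x y = a y x) (hpos : ∀ v ≠ 0, 0 < a v v) {u : ι → V}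
    (hu : LinearIndependent R u) : (gram a u).PosDef := by
  refine ⟨Matrix.isHermitian_iff_isSymm.mpr (gram_isSymm ha u), fun x hx => ?_⟩
  have hw : Finsupp.linearCombination R u x ≠ 0 := fun h =>
    hx (hu.finsuppLinearCombination_injective (h.trans (map_zero _).symm))
  simpa only [apply_linearCombination_self, star_trivial] using hpos _ hw

end LinearMap.BilinForm

theorem stmt_19_general {V : Type*} [NormedAddCommGroup V] [InnerProductSpace ℝ V]
    {N : ℕ}
    (a : V →ₗ[ℝ] V →ₗ[ℝ] ℝ)
    (hsymm : ∀ u v, a u v = a v u)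
    (hcoer : ∃ c > 0, ∀ v, c * ‖v‖ ^ 2 ≤ a v v)
    (L : Fin N → V →L[ℝ] ℝ)
    (u : Fin N → V)
    (hsol : ∀ k, (∀ v, (∀ j, L j v = 0) → a (u k) v = 0) ∧
      ∀ j, L j (u k) = if j = k then (1 : ℝ) else 0) :
    let M : Matrix (Fin N) (Fin N) ℝ := Matrix.of fun l k => a (u k) (u l)
    M.IsSymm ∧ M.PosDef := by
  obtain ⟨c, hc, hcoer⟩ := hcoer
  have hpos : ∀ v ≠ 0, 0 < a v v := fun v hv =>
    (mul_pos hc (pow_pos (norm_pos_iff.mpr hv) 2)).trans_le (hcoer v)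
  have hu : LinearIndependent ℝ u :=
    .of_pairwise_dual_eq_zero_one u (fun j => (L j : V →ₗ[ℝ] ℝ))
      (fun j k hjk => by simp [(hsol k).2, hjk]) (fun k => by simp [(hsol k).2])
  exact ⟨LinearMap.BilinForm.gram_isSymm hsymm u, LinearMap.BilinForm.gram_posDef hsymm hpos hu⟩

/-- Positive definiteness of the effective matrix M_{lk} = a(u⁽ᵏ⁾, u⁽ˡ⁾) built from
the constrained solutions u⁽ᵏ⁾ with unit data in the k-th constraint. -/
theorem stmt_19 {V : Type*} [NormedAddCommGroup V] [InnerProductSpace ℝ V]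
    [CompleteSpace V] {N : ℕ}
    (a : V →ₗ[ℝ] V →ₗ[ℝ] ℝ)
    (hsymm : ∀ u v, a u v = a v u)
    (hbdd : ∃ C > 0, ∀ u v, |a u v| ≤ C * ‖u‖ * ‖v‖)
    (hcoer : ∃ c > 0, ∀ v, c * ‖v‖ ^ 2 ≤ a v v)
    (L : Fin N → V →L[ℝ] ℝ) (hL : LinearIndependent ℝ L)
    (u : Fin N → V)
    (hsol : ∀ k, (∀ v, (∀ j, L j v = 0) → a (u k) v = 0) ∧
      ∀ j, L j (u k) = if j = k then (1 : ℝ) else 0) :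
    let M : Matrix (Fin N) (Fin N) ℝ := Matrix.of fun l k => a (u k) (u l)
    M.IsSymm ∧ M.PosDef :=
  stmt_19_general a hsymm hcoer L u hsol
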